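/- arXiv:math/0406117 — 3 statements merged into one kernel-verified Lean document; each statement's English description precedes it below -/
import Mathlib

section
/- Let n \ge 2. For every q with 1 \le q \le n-1 and all positive integers n_1, \ldots, n_{q+1}, the following identity holds: -\binom{n_1+1}{q} + \sum_{k=1}^{q} (-1)^{k+1} \sum \binom{n_1+1}{m_1}\cdots\binom{n_k+1}{m_k} \binom{n_1+\cdots+n_{k+1}+1}{q-k} = 0, where the inner sum is over all k-tuples (m_1, \ldots, m_k) of non-negative integers with m_1+\cdots+m_k = k and m_1+\cdots+m_h \ge h for all h = 1, \ldots, k-1. -/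
/-!
Read a tuple `m` as the walk from height `r` whose `i`-th step is `m i - 1`. A tuple in `Mset k`
is a walk from height `1` that stays positive and is back at `1` after `k` steps, that is, a walk
that first reaches `0` at step `k + 1` (the last step `m_{k+1} = 0` is forced).

Let `w_{r,j}` be the number of walks from height `r` that first reach `0` at step `r + j`, each
weighted by `∏ C(n_i + 1, m_i)`, and put
`F_r = ∑_{j ≤ q} (-X)^j (X + 1)^(n_1 + ⋯ + n_{r+j} + r) w_{r,j}` (`pathPoly`), so `F_0 = 1`.
Splitting off the first step gives `F_{r+1} = ∑_t C(n_1 + 1, t) (-X)^t (X + 1)^(n_1 + 1 - t) F_{r+t}`,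
where on the right `q` becomes `q - t` and `n` the shifted sequence `n_2, n_3, …`. The coefficients
are the terms of the binomial expansion of `(-X + (X + 1))^(n_1 + 1) = 1`, so induction on `q + r`
gives `F_r ≡ 1 mod X^(q+1)`. The identity says that the coefficient of `X^q` in `F_1` vanishes.
-/

open Finset

/-- `Mset k` is the set of `k`-tuples `(m_1, …, m_k)` of non-negative integers with
`m_1 + ⋯ + m_k = k` and `m_1 + ⋯ + m_h ≥ h` for all `h = 1, …, k-1`. -/
def Mset (k : ℕ) : Finset (Fin k → ℕ) :=
  (Finset.Nat.antidiagonalTuple k k).filter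
    (fun m => ∀ h < k, h ≤ ∑ i ∈ Finset.univ.filter (fun i : Fin k => (i : ℕ) < h), m i)

lemma sum_antidiagonalTuple_succ {M : Type*} [AddCommMonoid M] (l c : ℕ)
    (f : (Fin (l + 1) → ℕ) → M) :
    ∑ m ∈ Nat.antidiagonalTuple (l + 1) c, f m =
      ∑ t ∈ range (c + 1), ∑ m ∈ Nat.antidiagonalTuple l (c - t), f (Fin.cons t m) := by
  rw [sum_sigma']
  refine sum_nbij' (fun m => ⟨m 0, Fin.tail m⟩) (fun x => Fin.cons x.1 x.2) ?_ ?_ ?_ ?_ ?_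
  · intro m hm
    simp only [Nat.mem_antidiagonalTuple, Fin.sum_univ_succ, mem_sigma, mem_range] at hm ⊢
    exact ⟨by omega, by simp only [Fin.tail]; omega⟩
  · rintro ⟨t, m⟩ hm
    simp only [Nat.mem_antidiagonalTuple, Fin.sum_cons, mem_sigma, mem_range] at hm ⊢
    omega
  all_goals intros; simp

def partialSum {l : ℕ} (m : Fin l → ℕ) (h : ℕ) : ℕ :=
  ∑ i ∈ univ.filter (fun i : Fin l => (i : ℕ) < h), m i

@[simp]
lemma partialSum_zero {l : ℕ} (m : Fin l → ℕ) : partialSum m 0 = 0 := by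
  simp [partialSum]

lemma partialSum_cons_succ {l : ℕ} (t : ℕ) (m : Fin l → ℕ) (h : ℕ) :
    partialSum (Fin.cons t m : Fin (l + 1) → ℕ) (h + 1) = t + partialSum m h := by
  simp [partialSum, sum_filter, Fin.sum_univ_succ]

/-- The walks with `∑ m = c` that are positive at times `0, …, l - 1`: the height after `h` steps
is `r + partialSum m h - h`. -/
def pathSet (l r c : ℕ) : Finset (Fin l → ℕ) :=
  (Nat.antidiagonalTuple l c).filter fun m => ∀ h < l, h < r + partialSum m h

lemma Mset_eq_pathSet (k : ℕ) : Mset k = pathSet k 1 k := by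
  refine filter_congr fun m _ => forall₂_congr fun h _ => ?_
  rw [partialSum]
  omega

def pathWeight : ℕ → (ℕ → ℕ) → ℕ → ℕ → ℕ
  | 0, _, _, c => if c = 0 then 1 else 0
  | _ + 1, _, 0, _ => 0
  | l + 1, b, r + 1, c =>
      ∑ t ∈ range (c + 1), (b 0 + 1).choose t * pathWeight l (fun i => b (i + 1)) (r + t) (c - t)

lemma sum_pathSet_prod_choose (l : ℕ) (b : ℕ → ℕ) (r c : ℕ) :
    ∑ m ∈ pathSet l r c, ∏ i : Fin l, (b i + 1).choose (m i) = pathWeight l b r c := by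
  induction l generalizing b r c with
  | zero =>
    cases c <;> simp [pathSet, pathWeight]
  | succ l ih =>
    cases r with
    | zero =>
      refine sum_eq_zero fun m hm => absurd ((mem_filter.1 hm).2 0 l.succ_pos) (by simp)
    | succ r =>
      rw [pathWeight, pathSet, sum_filter, sum_antidiagonalTuple_succ]
      refine sum_congr rfl fun t _ => ?_
      rw [← ih, pathSet, sum_filter, mul_sum]
      refine sum_congr rfl fun m _ => ?_
      have hcons : (∀ h < l + 1, h < r + 1 + partialSum (Fin.cons t m : Fin (l + 1) → ℕ) h) ↔
          ∀ h < l, h < r + t + partialSum m h := by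
        constructor
        · intro H h hh
          have := H (h + 1) (by omega)
          rw [partialSum_cons_succ] at this
          omega
        · rintro H (_ | h) hh
          · omega
          · rw [partialSum_cons_succ]
            have := H h (by omega)
            omega
      simp only [hcons]
      split_ifs <;> simp [Fin.prod_univ_succ]

/-- A walk that first reaches `0` at step `l + 1` is at height `1` at time `l`, so its last step
is `m l = 0`. -/
lemma pathWeight_succ_of_add_eq (l : ℕ) (b : ℕ → ℕ) (r c : ℕ) (h : r + c = l + 1) :
    pathWeight (l + 1) b r c = pathWeight l b r c := by
  induction l generalizing b r c with
  | zero =>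
    obtain ⟨rfl, rfl⟩ | ⟨rfl, rfl⟩ : r = 0 ∧ c = 1 ∨ r = 1 ∧ c = 0 := by omega
    all_goals simp [pathWeight]
  | succ l ih =>
    cases r with
    | zero => simp [pathWeight]
    | succ r =>
      rw [pathWeight, pathWeight]
      refine sum_congr rfl fun t ht => ?_
      rw [ih _ _ _ (by have := mem_range.mp ht; omega)]

open Polynomial

/-- The `t`-th term of the binomial expansion of `(-X + (X + 1)) ^ a = 1`. -/
noncomputable def binomTerm (a t : ℕ) : ℤ[X] :=
  (-X) ^ t * (X + 1) ^ (a - t) * (a.choose t : ℤ[X])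

lemma X_pow_dvd_binomTerm (a t : ℕ) : (X : ℤ[X]) ^ t ∣ binomTerm a t :=
  ((pow_dvd_pow_of_dvd (dvd_neg.mpr dvd_rfl) t).mul_right _).mul_right _

lemma X_pow_succ_dvd_sum_binomTerm_sub_one (a q : ℕ) :
    (X : ℤ[X]) ^ (q + 1) ∣ ∑ t ∈ range (q + 1), binomTerm a t - 1 := by
  have hvanish : ∑ t ∈ range q, binomTerm a (a + 1 + t) = 0 :=
    sum_eq_zero fun t _ => by simp [binomTerm, Nat.choose_eq_zero_of_lt (by omega : a < a + 1 + t)]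
  have hfull : ∑ t ∈ range (q + 1 + a), binomTerm a t = 1 := by
    rw [show q + 1 + a = a + 1 + q by omega, sum_range_add, hvanish, add_zero]
    simp only [binomTerm]
    rw [← add_pow, neg_add_cancel_left, one_pow]
  have htail : ∑ t ∈ range (q + 1), binomTerm a t - 1 =
      -∑ t ∈ range a, binomTerm a (q + 1 + t) := by
    rw [← hfull, sum_range_add _ (q + 1) a]
    ring
  rw [htail, dvd_neg]
  exact dvd_sum fun t _ => (pow_dvd_pow X (by omega)).trans (X_pow_dvd_binomTerm a _)

noncomputable def pathTerm (b : ℕ → ℕ) (r j : ℕ) : ℤ[X] :=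
  (-X) ^ j * (X + 1) ^ (∑ i ∈ range (j + r), b i + r) * (pathWeight (j + r) b r j : ℤ[X])

noncomputable def pathPoly (b : ℕ → ℕ) (r q : ℕ) : ℤ[X] :=
  ∑ j ∈ range (q + 1), pathTerm b r j

lemma pathPoly_zero (b : ℕ → ℕ) (q : ℕ) : pathPoly b 0 q = 1 := by
  have hterm (j : ℕ) : pathTerm b 0 j = if j = 0 then 1 else 0 := by
    cases j <;> simp [pathTerm, pathWeight]
  simp [pathPoly, hterm]

lemma pathTerm_succ (b : ℕ → ℕ) (r j : ℕ) :
    pathTerm b (r + 1) j = ∑ t ∈ range (j + 1),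
      binomTerm (b 0 + 1) t * pathTerm (fun i => b (i + 1)) (r + t) (j - t) := by
  rw [pathTerm, show j + (r + 1) = j + r + 1 by rfl, pathWeight, Nat.cast_sum, mul_sum]
  refine sum_congr rfl fun t ht => ?_
  obtain ⟨u, rfl⟩ := Nat.exists_eq_add_of_le (Nat.lt_succ_iff.mp (mem_range.mp ht))
  rcases le_or_gt t (b 0 + 1) with htb | htb
  · have hlen : u + (r + t) = t + u + r := by omega
    have hexp : ∑ i ∈ range (t + u + r + 1), b i + (r + 1) =
        (b 0 + 1 - t) + (∑ i ∈ range (u + (r + t)), b (i + 1) + (r + t)) := by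
      rw [sum_range_succ', hlen]
      omega
    rw [pathTerm, binomTerm, hexp, Nat.add_sub_cancel_left, hlen, pow_add, pow_add, Nat.cast_mul]
    ring
  · simp [binomTerm, Nat.choose_eq_zero_of_lt htb]

lemma pathPoly_succ (b : ℕ → ℕ) (r q : ℕ) :
    pathPoly b (r + 1) q = ∑ t ∈ range (q + 1),
      binomTerm (b 0 + 1) t * pathPoly (fun i => b (i + 1)) (r + t) (q - t) := by
  simp only [pathPoly, pathTerm_succ]
  rw [sum_range_diag_flip (q + 1) fun t u =>
    binomTerm (b 0 + 1) t * pathTerm (fun i => b (i + 1)) (r + t) u]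
  refine sum_congr rfl fun t ht => ?_
  rw [mul_sum, show q + 1 - t = q - t + 1 by have := mem_range.mp ht; omega]

theorem X_pow_succ_dvd_pathPoly_sub_one (b : ℕ → ℕ) (q r : ℕ) :
    (X : ℤ[X]) ^ (q + 1) ∣ pathPoly b r q - 1 := by
  match r with
  | 0 => simp [pathPoly_zero]
  | r + 1 =>
    have hsplit : pathPoly b (r + 1) q - 1 =
        ∑ t ∈ range (q + 1), binomTerm (b 0 + 1) t *
          (pathPoly (fun i => b (i + 1)) (r + t) (q - t) - 1) +
        (∑ t ∈ range (q + 1), binomTerm (b 0 + 1) t - 1) := by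
      simp only [pathPoly_succ, mul_sub, mul_one, sum_sub_distrib]
      ring
    rw [hsplit]
    refine dvd_add (dvd_sum fun t ht => ?_) (X_pow_succ_dvd_sum_binomTerm_sub_one _ q)
    have htq : t ≤ q := Nat.lt_succ_iff.mp (mem_range.mp ht)
    have := mul_dvd_mul (X_pow_dvd_binomTerm (b 0 + 1) t)
      (X_pow_succ_dvd_pathPoly_sub_one (fun i => b (i + 1)) (q - t) (r + t))
    rwa [← pow_add, show t + (q - t + 1) = q + 1 by omega] at this
termination_by q + r
decreasing_by omega

lemma coeff_pathPoly (b : ℕ → ℕ) (r q : ℕ) :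
    (pathPoly b r q).coeff q = ∑ j ∈ range (q + 1),
      (-1) ^ j * (pathWeight (j + r) b r j * (∑ i ∈ range (j + r), b i + r).choose (q - j) : ℤ) := by
  rw [pathPoly, finsetSum_coeff]
  refine sum_congr rfl fun j hj => ?_
  rw [pathTerm, neg_pow, coeff_mul_natCast, mul_comm ((-1) ^ j), mul_assoc, coeff_X_pow_mul',
    if_pos (Nat.lt_succ_iff.mp (mem_range.mp hj)), show (-1 : ℤ[X]) ^ j = C ((-1) ^ j) by simp,
    coeff_C_mul, coeff_X_add_one_pow]
  ring

theorem binomial_identity_general (q : ℕ) (hq1 : 1 ≤ q) (nv : ℕ → ℕ) :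
    -(((nv 0 + 1).choose q : ℤ)) +
      ∑ k ∈ Finset.Icc 1 q, (-1 : ℤ) ^ (k + 1) *
        ∑ m ∈ Mset k,
          (∏ i : Fin k, ((nv i + 1).choose (m i) : ℤ)) *
            (((∑ i ∈ Finset.range (k + 1), nv i) + 1).choose (q - k) : ℤ) = 0 := by
  have hcoeff : (pathPoly nv 1 q).coeff q = 0 := by
    have := X_pow_dvd_iff.mp (X_pow_succ_dvd_pathPoly_sub_one nv q 1) q q.lt_succ_self
    rwa [coeff_sub, coeff_one, if_neg (by omega), sub_zero] at this
  have hMset (k : ℕ) : ∑ m ∈ Mset k, ∏ i : Fin k, ((nv i + 1).choose (m i) : ℤ) =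
      pathWeight (k + 1) nv 1 k := by
    rw [pathWeight_succ_of_add_eq k nv 1 k (add_comm 1 k), ← sum_pathSet_prod_choose,
      Mset_eq_pathSet]
    push_cast
    rfl
  have hw : pathWeight 1 nv 1 0 = 1 := by simp [pathWeight]
  rw [coeff_pathPoly, range_eq_Ico, sum_eq_sum_Ico_succ_bot (by omega),
    Ico_add_one_right_eq_Icc] at hcoeff
  simp only [hw, zero_add, pow_zero, one_mul, Nat.sub_zero, sum_range_one, Nat.cast_one] at hcoeff
  simp only [← sum_mul, hMset, pow_succ, mul_neg_one, neg_mul, sum_neg_distrib, ← neg_add,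
    neg_eq_zero]
  exact hcoeff

/-- Let `n ≥ 2`.  For every `q` with `1 ≤ q ≤ n - 1` and all positive integers
`n_1, …, n_{q+1}` (here `nv i = n_{i+1}` for `0 ≤ i ≤ q`), one has
`-C(n_1+1, q) + ∑_{k=1}^{q} (-1)^{k+1} ∑_{m ∈ M_k} C(n_1+1,m_1)⋯C(n_k+1,m_k)
  C(n_1+⋯+n_{k+1}+1, q-k) = 0`. -/
theorem binomial_identity (n : ℕ) (hn : 2 ≤ n) (q : ℕ) (hq1 : 1 ≤ q) (hq2 : q ≤ n - 1)
    (nv : ℕ → ℕ) (hnv : ∀ i ≤ q, 0 < nv i) :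
    -(((nv 0 + 1).choose q : ℤ)) +
      ∑ k ∈ Finset.Icc 1 q, (-1 : ℤ) ^ (k + 1) *
        ∑ m ∈ Mset k,
          (∏ i : Fin k, ((nv i + 1).choose (m i) : ℤ)) *
            (((∑ i ∈ Finset.range (k + 1), nv i) + 1).choose (q - k) : ℤ) = 0 :=
  binomial_identity_general q hq1 nv
end

section
/- In the Hopf algebra H^{dif} = \mathbb{C}\langle a_1, a_2, \ldots \rangle with co-product \Delta a_n = \sum_{k=0}^{n} a_k \otimes Q_{n-k}^{(k)}(a) (where a_0 = 1), the antipode S satisfies the explicit non-recursive formula S a_n = -a_n - \sum_{k=1}^{n-1} (-1)^k \sum_{n_1+\cdots+n_{k+1}=n, n_i > 0} \lambda(n_1,\ldots,n_k) a_{n_1}\cdots a_{n_k} a_{n_{k+1}}, where \lambda(n_1,\ldots,n_k) = \sum \binom{n_1+1}{m_1}\cdots\binom{n_k+1}{m_k}, the sum being over non-negative integers m_1, \ldots, m_k with m_1+\cdots+m_k = k and m_1+\cdots+m_h \ge h for h = 1, \ldots, k-1. -/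
/-!
For a composition `L = (n_1, …, n_r)` of `n` write `a_L = a_{n_1} ⋯ a_{n_r}` and
`σ(L) = (-1)^r λ(n_1, …, n_{r-1})`. The formula says `S a_n = ∑_L σ(L) a_L`; since `σ(()) = 1`, it
suffices that these sums satisfy the recursion `∑_{p=0}^{n} S(a_p) Q_{n-p}^{(p)}(a) = 0` (`n ≥ 1`).

Dropping the factors `a_0 = 1`, `Q_m^{(p)}(a) = ∑_L C(p+1, r) a_L` over the compositions of `m`.
Cutting each composition of `n` in two, the recursion becomes, for every `(n_1, …, n_{K+1})` with
prefix sums `F_s`, the scalar identity `∑_{s=0}^{K+1} σ(n_1, …, n_s) C(F_s + 1, K + 1 - s) = 0`,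
i.e. `∑_{s=0}^{K} (-1)^s λ_s C(F_{s+1} + 1, K - s) = δ_{K,0}` with `λ_s = λ(n_1, …, n_s)`.

This is the coefficient of `X^K` in `P_K + ∑_{s<K} λ_s (-X)^s (1+X)^{F_{s+1}+1} = 1`. Here
`P_K = ∑_t g_K(t) (-X)^t (1+X)^{F_K+K-t}`, where `g_K(t)` sums `∏ C(n_i + 1, m_i)` over `m` with
total `t` and `m_1 + ⋯ + m_h ≥ h` for `h ≤ K`; thus `g_K(K) = λ_K` and `g_K(t) = 0` for `t < K`.
Splitting off the last entry of `m`, `g_{K+1}` is the convolution of `g_K` with `C(n_{K+1} + 1, ·)`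
except at `t = K`, so multiplying `P_K` by `((-X) + (1+X))^{n_{K+1}+1} = 1` gives
`P_K = P_{K+1} + λ_K (-X)^K (1+X)^{F_{K+1}+1}`; induct on `K` from `P_0 = 1`.
-/

open Finset

noncomputable section

/-- The non-commutative Hopf algebra of formal diffeomorphisms, as an algebra:
the free associative algebra over `ℂ` on generators `a 1, a 2, …`. -/
abbrev Hd : Type := FreeAlgebra ℂ {n : ℕ // 0 < n}

/-- The generators `a n`, with the convention `a 0 = 1`. -/
def a (n : ℕ) : Hd := if h : 0 < n then FreeAlgebra.ι ℂ ⟨n, h⟩ else 1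

/-- `Q k m` is the polynomial `Q_m^{(k-1)}(a) = ∑_{j_0+⋯+j_{k-1} = m} a_{j_0} ⋯ a_{j_{k-1}}`,
the sum over `k`-tuples of non-negative integers with sum `m`.  In particular
`Q (n+1) m` is `Q_m^{(n)}(a)` of the paper, and `Q 0 m = Q_m^{(-1)}(a) = δ_{m,0}`. -/
def Q (k m : ℕ) : Hd :=
  ∑ j ∈ Finset.Nat.antidiagonalTuple k m, (List.ofFn fun i => a (j i)).prod


/-- The antipode of `H^dif` on the generators, defined by the graded-connected recursion
`S a_n = -a_n - ∑_{p=1}^{n-1} (S a_p) Q_{n-p}^{(p)}(a)`. -/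
def Sgen : ℕ → Hd
  | n =>
    -(a n) - ∑ p ∈ (Finset.Icc 1 (n - 1)).attach, Sgen p.1 * Q (p.1 + 1) (n - p.1)
decreasing_by
  have h := p.2
  simp only [Finset.mem_Icc] at h
  omega

/-- The coefficient `λ(n_1,…,n_k) = ∑_{m ∈ M_k} C(n_1+1,m_1) ⋯ C(n_k+1,m_k)`. -/
def lam (k : ℕ) (nv : Fin k → ℕ) : ℕ :=
  ∑ m ∈ Mset k, ∏ i, (nv i + 1).choose (m i)

open Polynomial

theorem sum_antidiagonalTuple_succ_s6 {M : Type*} [AddCommMonoid M] (k n : ℕ)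
    (F : (Fin (k + 1) → ℕ) → M) :
    ∑ x ∈ Nat.antidiagonalTuple (k + 1) n, F x =
      ∑ p ∈ antidiagonal n, ∑ x ∈ Nat.antidiagonalTuple k p.1, F (Fin.snoc x p.2) := by
  rw [sum_sigma']
  refine sum_nbij' (fun x => ⟨(∑ i, Fin.init x i, x (Fin.last k)), Fin.init x⟩)
    (fun y => Fin.snoc y.2 y.1.2) ?_ ?_ (fun x _ => Fin.snoc_init_self x) ?_
    (fun x _ => by rw [Fin.snoc_init_self])
  · intro x hx
    simp only [Nat.mem_antidiagonalTuple, mem_sigma, HasAntidiagonal.mem_antidiagonal] at hx ⊢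
    rw [← hx, Fin.sum_univ_castSucc]
    simp [Fin.init]
  · rintro ⟨⟨u, v⟩, y⟩ hy
    simp only [Nat.mem_antidiagonalTuple, mem_sigma, HasAntidiagonal.mem_antidiagonal] at hy ⊢
    simpa [Fin.sum_univ_castSucc, hy.2] using hy.1
  · rintro ⟨⟨u, v⟩, y⟩ hy
    simp only [Nat.mem_antidiagonalTuple, mem_sigma, HasAntidiagonal.mem_antidiagonal] at hy
    simp [hy.2]

theorem sum_range_mul_sum_range_eq_sum_antidiagonal {R : Type*} [CommSemiring R] (x y : R)
    {a b : ℕ → R} {N M : ℕ} (ha : ∀ i, N < i → a i = 0) (hb : ∀ j, M < j → b j = 0) :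
    (∑ i ∈ range (N + 1), a i * x ^ i * y ^ (N - i)) *
        ∑ j ∈ range (M + 1), b j * x ^ j * y ^ (M - j) =
      ∑ t ∈ range (N + M + 1), (∑ p ∈ antidiagonal t, a p.1 * b p.2) * x ^ t * y ^ (N + M - t) := by
  rw [sum_mul_sum, ← sum_product']
  simp only [sum_mul]
  rw [sum_sigma']
  have term : ∀ i j, i ≤ N → j ≤ M → a i * x ^ i * y ^ (N - i) * (b j * x ^ j * y ^ (M - j)) =
      a i * b j * x ^ (i + j) * y ^ (N + M - (i + j)) := fun i j hi hj => by
    rw [show N + M - (i + j) = (N - i) + (M - j) by omega]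
    ring
  refine sum_bij_ne_zero (fun p _ _ => ⟨p.1 + p.2, p⟩) ?_ ?_ ?_ ?_
  · intro p hp _
    simp only [mem_product, mem_range] at hp
    simp only [mem_sigma, mem_range, HasAntidiagonal.mem_antidiagonal, and_true]
    omega
  · intro p _ _ q _ _ h
    exact (Sigma.mk.inj_iff.1 h).2.eq
  · rintro ⟨t, i, j⟩ hp hne
    simp only [mem_sigma, mem_range, HasAntidiagonal.mem_antidiagonal] at hp
    obtain ⟨-, rfl⟩ := hp
    have hi : i ≤ N := by_contra fun h => hne (by simp [ha i (by omega)])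
    have hj : j ≤ M := by_contra fun h => hne (by simp [hb j (by omega)])
    exact ⟨(i, j), by simp only [mem_product, mem_range]; omega, by rwa [term i j hi hj], rfl⟩
  · rintro ⟨i, j⟩ hp _
    simp only [mem_product, mem_range] at hp
    exact term i j (by omega) (by omega)

theorem coeff_neg_X_pow_mul_one_add_X_pow (s e K : ℕ) :
    ((-X) ^ s * (1 + X) ^ e : ℤ[X]).coeff K =
      if s ≤ K then (-1) ^ s * (e.choose (K - s) : ℤ) else 0 := by
  have : ((-X) ^ s * (1 + X) ^ e : ℤ[X]) = C ((-1) ^ s) * ((1 + X) ^ e * X ^ s) := by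
    rw [neg_pow, C_pow, C_neg, C_1]; ring
  rw [this, coeff_C_mul, coeff_mul_X_pow', coeff_one_add_X_pow]
  split_ifs <;> simp

theorem sum_take_eq_sum_range_getD (L : List ℕ) (n : ℕ) :
    (L.take n).sum = ∑ i ∈ range n, L.getD i 0 := by
  induction n with
  | zero => simp
  | succ n ih =>
    rw [sum_range_succ, ← ih]
    rcases Nat.lt_or_ge n L.length with h | h
    · rw [List.sum_take_succ _ _ h, List.getD_eq_getElem _ _ h]
    · rw [List.take_of_length_le h, List.take_of_length_le (by omega),
        List.getD_eq_default _ _ h, add_zero]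

theorem lam_zero (nv : Fin 0 → ℕ) : lam 0 nv = 1 := by
  simp [lam, Mset, Nat.antidiagonalTuple_zero_zero]

def IsBallot {K : ℕ} (m : Fin K → ℕ) : Prop :=
  ∀ h ≤ K, h ≤ ∑ i ∈ univ.filter (fun i : Fin K => (i : ℕ) < h), m i

instance {K : ℕ} : DecidablePred (IsBallot (K := K)) :=
  fun _ => inferInstanceAs (Decidable (∀ h ≤ K, _))

theorem sum_filter_lt_snoc {K h : ℕ} (hh : h ≤ K) (m : Fin K → ℕ) (v : ℕ) :
    ∑ i ∈ univ.filter (fun i : Fin (K + 1) => (i : ℕ) < h), Fin.snoc (α := fun _ => ℕ) m v i =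
      ∑ i ∈ univ.filter (fun i : Fin K => (i : ℕ) < h), m i := by
  simp only [sum_filter, Fin.sum_univ_castSucc, Fin.val_castSucc, Fin.snoc_castSucc,
    Fin.val_last, if_neg (not_lt.2 hh), add_zero]

theorem isBallot_snoc_iff {K : ℕ} (m : Fin K → ℕ) (v : ℕ) :
    IsBallot (Fin.snoc (α := fun _ => ℕ) m v) ↔ IsBallot m ∧ K + 1 ≤ ∑ i, m i + v := by
  have htotal : ∑ i ∈ univ.filter (fun i : Fin (K + 1) => (i : ℕ) < K + 1),
      Fin.snoc (α := fun _ => ℕ) m v i = ∑ i, m i + v := by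
    rw [filter_true_of_mem fun i _ => i.2, Fin.sum_univ_castSucc]
    simp
  constructor
  · intro H
    refine ⟨fun h hh => ?_, htotal ▸ H (K + 1) le_rfl⟩
    rw [← sum_filter_lt_snoc hh m v]
    exact H h (by omega)
  · rintro ⟨H, hK⟩ h hh
    rcases Nat.lt_or_ge h (K + 1) with hlt | hge
    · rw [sum_filter_lt_snoc (by omega)]
      exact H h (by omega)
    · rwa [show h = K + 1 by omega, htotal]

section Ballot

variable (f : ℕ → ℕ)

def ballotSum (K t : ℕ) : ℕ :=
  ∑ m ∈ (Nat.antidiagonalTuple K t).filter IsBallot, ∏ i : Fin K, (f i + 1).choose (m i)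

theorem ballotSum_eq_zero_of_lt {K t : ℕ} (h : t < K) : ballotSum f K t = 0 := by
  refine sum_eq_zero fun m hm => absurd ((mem_filter.1 hm).2 K le_rfl) ?_
  rw [filter_true_of_mem fun i _ => i.2, (Nat.mem_antidiagonalTuple.1 (mem_filter.1 hm).1)]
  omega

theorem ballotSum_self (K : ℕ) : ballotSum f K K = lam K (fun i => f i) := by
  refine sum_congr (filter_congr fun m hm => ?_) fun _ _ => rfl
  rw [Nat.mem_antidiagonalTuple] at hm
  refine ⟨fun H h hh => H h hh.le, fun H h hh => ?_⟩
  rcases hh.lt_or_eq with hlt | rfl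
  · exact H h hlt
  · rw [filter_true_of_mem fun i _ => i.2, hm]

theorem ballotSum_eq_zero_of_gt {K t : ℕ} (h : ∑ i ∈ range K, f i + K < t) :
    ballotSum f K t = 0 := by
  refine sum_eq_zero fun m hm => ?_
  rw [mem_filter, Nat.mem_antidiagonalTuple] at hm
  obtain ⟨i, hi⟩ : ∃ i : Fin K, f i + 1 < m i := by
    by_contra! hall
    have : ∑ i, m i ≤ ∑ i : Fin K, (f i + 1) := sum_le_sum fun i _ => hall i
    rw [sum_add_distrib, Fin.sum_univ_eq_sum_range f] at this
    simp only [sum_const, card_univ, Fintype.card_fin, smul_eq_mul, mul_one] at this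
    omega
  exact prod_eq_zero (mem_univ i) (Nat.choose_eq_zero_of_lt hi)

theorem ballotSum_succ {K t : ℕ} (h : K < t) :
    ballotSum f (K + 1) t =
      ∑ p ∈ antidiagonal t, ballotSum f K p.1 * (f K + 1).choose p.2 := by
  rw [ballotSum, sum_filter, sum_antidiagonalTuple_succ_s6]
  refine sum_congr rfl fun p hp => ?_
  rw [ballotSum, sum_filter, sum_mul]
  refine sum_congr rfl fun m hm => ?_
  rw [HasAntidiagonal.mem_antidiagonal] at hp
  rw [Nat.mem_antidiagonalTuple] at hm
  simp only [isBallot_snoc_iff, hm, hp, show K + 1 ≤ t from h, and_true, ite_mul, zero_mul,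
    Fin.prod_univ_castSucc, Fin.snoc_castSucc, Fin.snoc_last, Fin.val_castSucc, Fin.val_last]

theorem sum_antidiagonal_ballotSum_mul_choose (K t : ℕ) :
    ∑ p ∈ antidiagonal t, ballotSum f K p.1 * (f K + 1).choose p.2 =
      ballotSum f (K + 1) t + if t = K then lam K (fun i => f i) else 0 := by
  rcases lt_trichotomy t K with hlt | rfl | hgt
  · rw [ballotSum_eq_zero_of_lt f (by omega : t < K + 1), if_neg hlt.ne]
    refine sum_eq_zero fun p hp => ?_
    rw [HasAntidiagonal.mem_antidiagonal] at hp
    rw [ballotSum_eq_zero_of_lt f (by omega : p.1 < K), zero_mul]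
  · rw [ballotSum_eq_zero_of_lt f (Nat.lt_succ_self t), if_pos rfl, zero_add,
      sum_eq_single (t, 0), ballotSum_self, Nat.choose_zero_right, mul_one]
    · rintro ⟨u, v⟩ hp hne
      rw [HasAntidiagonal.mem_antidiagonal] at hp
      rw [ballotSum_eq_zero_of_lt f (show u < t by grind), zero_mul]
    · simp
  · rw [ballotSum_succ f hgt, if_neg hgt.ne', add_zero]

-- `(1+X)^N G(-X/(1+X))` for `G(z) = ∑_t ballotSum f K t z^t` and `N = ∑_{i<K} (f i + 1) ≥ deg G`.
def ballotPoly (K : ℕ) : ℤ[X] :=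
  ∑ t ∈ range (∑ i ∈ range K, f i + K + 1),
    (ballotSum f K t : ℤ[X]) * (-X) ^ t * (1 + X) ^ (∑ i ∈ range K, f i + K - t)

theorem ballotPoly_zero : ballotPoly f 0 = 1 := by
  simp [ballotPoly, ballotSum, filter_singleton, IsBallot]

theorem ballotPoly_succ (K : ℕ) :
    ballotPoly f (K + 1) = ballotPoly f K -
      (lam K (fun i => f i) : ℤ[X]) * (-X) ^ K * (1 + X) ^ (∑ i ∈ range (K + 1), f i + 1) := by
  set N := ∑ i ∈ range K, f i + K
  have hN : ∑ i ∈ range (K + 1), f i + (K + 1) = N + (f K + 1) := by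
    rw [sum_range_succ]; ring
  have hconv : ballotPoly f K =
      ∑ t ∈ range (N + (f K + 1) + 1),
        ((ballotSum f (K + 1) t + if t = K then lam K (fun i => f i) else 0 : ℕ) : ℤ[X]) *
          (-X) ^ t * (1 + X) ^ (N + (f K + 1) - t) := calc
    ballotPoly f K = ballotPoly f K * (-X + (1 + X)) ^ (f K + 1) := by simp
    _ = ballotPoly f K * ∑ j ∈ range (f K + 1 + 1),
          ((f K + 1).choose j : ℤ[X]) * (-X) ^ j * (1 + X) ^ (f K + 1 - j) := by
      rw [add_pow]; simp only [mul_comm, mul_left_comm]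
    _ = _ := by
      rw [ballotPoly, sum_range_mul_sum_range_eq_sum_antidiagonal]
      · simp only [← sum_antidiagonal_ballotSum_mul_choose, Nat.cast_sum, Nat.cast_mul]
        rfl
      · exact fun t ht => by rw [ballotSum_eq_zero_of_gt f ht, Nat.cast_zero]
      · exact fun j hj => by rw [Nat.choose_eq_zero_of_lt hj, Nat.cast_zero]
  rw [hconv, ballotPoly, hN]
  simp only [Nat.cast_add, add_mul, sum_add_distrib, Nat.cast_ite, Nat.cast_zero, ite_mul,
    zero_mul, sum_ite_eq', mem_range, if_pos (show K < N + (f K + 1) + 1 by omega)]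
  rw [show N + (f K + 1) - K = ∑ i ∈ range (K + 1), f i + 1 by rw [← hN]; omega]
  ring

theorem ballotPoly_add_sum (K : ℕ) :
    ballotPoly f K + ∑ s ∈ range K,
      (lam s (fun i => f i) : ℤ[X]) * (-X) ^ s * (1 + X) ^ (∑ i ∈ range (s + 1), f i + 1) = 1 := by
  induction K with
  | zero => simp [ballotPoly_zero]
  | succ K ih => rw [sum_range_succ, ballotPoly_succ]; linear_combination ih

theorem coeff_ballotPoly_self (K : ℕ) :
    (ballotPoly f K).coeff K = (-1) ^ K * lam K (fun i => f i) := by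
  rw [ballotPoly, finsetSum_coeff, sum_eq_single K]
  · rw [mul_assoc, coeff_natCast_mul, coeff_neg_X_pow_mul_one_add_X_pow, if_pos le_rfl,
      Nat.sub_self, Nat.choose_zero_right, ballotSum_self]
    push_cast; ring
  · intro t _ hne
    rw [mul_assoc, coeff_natCast_mul, coeff_neg_X_pow_mul_one_add_X_pow]
    rcases lt_or_gt_of_ne hne with hlt | hgt
    · rw [ballotSum_eq_zero_of_lt f hlt]; simp
    · rw [if_neg (by omega), mul_zero]
  · intro h
    exact absurd (mem_range.2 (by omega)) h

theorem sum_range_lam_mul_choose (K : ℕ) :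
    ∑ s ∈ range (K + 1), (-1) ^ s * (lam s (fun i => f i) : ℤ) *
      (∑ i ∈ range (s + 1), f i + 1).choose (K - s) = if K = 0 then 1 else 0 := by
  have h := congrArg (fun p : ℤ[X] => p.coeff K) (ballotPoly_add_sum f K)
  simp only [coeff_add, finsetSum_coeff, mul_assoc, coeff_natCast_mul,
    coeff_neg_X_pow_mul_one_add_X_pow, coeff_ballotPoly_self, coeff_one] at h
  rw [sum_range_succ, Nat.sub_self, Nat.choose_zero_right, ← h, add_comm]
  push_cast
  congr 1
  · rw [mul_one]
  · refine sum_congr rfl fun s hs => ?_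
    rw [if_pos (mem_range.1 hs).le]
    ring

end Ballot

def compositions (n : ℕ) : Finset (List ℕ) :=
  (univ : Finset (Composition n)).image Composition.blocks

theorem mem_compositions {n : ℕ} {L : List ℕ} :
    L ∈ compositions n ↔ (∀ x ∈ L, 0 < x) ∧ L.sum = n := by
  simp only [compositions, mem_image, mem_univ, true_and]
  exact ⟨by rintro ⟨c, rfl⟩; exact ⟨fun _ => c.blocks_pos, c.blocks_sum⟩,
    fun ⟨hpos, hsum⟩ => ⟨⟨L, hpos _, hsum⟩, rfl⟩⟩

theorem compositions_zero : compositions 0 = {[]} := by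
  ext L
  simp only [mem_compositions, mem_singleton, List.sum_eq_zero_iff]
  exact ⟨fun ⟨hpos, hzero⟩ => List.eq_nil_iff_forall_not_mem.2 fun x hx =>
    (hpos x hx).ne' (hzero x hx), by rintro rfl; simp⟩

theorem ne_nil_of_mem_compositions {n : ℕ} {L : List ℕ} (hL : L ∈ compositions n) (hn : n ≠ 0) :
    L ≠ [] := by
  rintro rfl
  exact hn (mem_compositions.1 hL).2.symm

theorem sum_antidiagonal_sum_compositions {M : Type*} [AddCommMonoid M] (n : ℕ)
    (F : List ℕ → List ℕ → M) :
    ∑ p ∈ antidiagonal n, ∑ L₁ ∈ compositions p.1, ∑ L₂ ∈ compositions p.2, F L₁ L₂ =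
      ∑ L ∈ compositions n, ∑ s ∈ range (L.length + 1), F (L.take s) (L.drop s) := by
  rw [sum_sigma', sum_sigma', sum_sigma']
  refine sum_nbij' (fun x => ⟨x.1.2 ++ x.2, x.1.2.length⟩)
    (fun y => ⟨⟨((y.1.take y.2).sum, (y.1.drop y.2).sum), y.1.take y.2⟩, y.1.drop y.2⟩)
    ?_ ?_ ?_ ?_ ?_
  · rintro ⟨⟨p, L₁⟩, L₂⟩ hx
    simp only [mem_sigma, HasAntidiagonal.mem_antidiagonal, mem_compositions,
      mem_range] at hx ⊢
    refine ⟨⟨fun x hx' => ?_, by rw [List.sum_append, hx.1.2.2, hx.2.2, hx.1.1]⟩, ?_⟩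
    · rcases List.mem_append.1 hx' with h | h
      exacts [hx.1.2.1 x h, hx.2.1 x h]
    · rw [List.length_append]; omega
  · rintro ⟨L, s⟩ hy
    simp only [mem_sigma, HasAntidiagonal.mem_antidiagonal, mem_compositions,
      mem_range, and_true] at hy ⊢
    exact ⟨⟨by rw [List.sum_take_add_sum_drop, hy.1.2], fun x hx => hy.1.1 x
      (List.mem_of_mem_take hx)⟩, fun x hx => hy.1.1 x (List.mem_of_mem_drop hx)⟩
  · rintro ⟨⟨p, L₁⟩, L₂⟩ hx
    simp only [mem_sigma, HasAntidiagonal.mem_antidiagonal, mem_compositions] at hx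
    simp [hx.1.2.2, hx.2.2]
  · rintro ⟨L, s⟩ hy
    simp only [mem_sigma, mem_range] at hy
    simp [List.length_take, show s ≤ L.length by omega]
  · rintro ⟨⟨p, L₁⟩, L₂⟩ _
    simp

theorem sum_compositions_eq_sum_range {M : Type*} [AddCommMonoid M] (n : ℕ) (F : List ℕ → M) :
    ∑ L ∈ compositions n, F L =
      ∑ l ∈ range (n + 1), ∑ ν ∈ (Nat.antidiagonalTuple l n).filter (fun ν => ∀ i, 0 < ν i),
        F (List.ofFn ν) := by
  rw [← sum_fiberwise_of_maps_to (g := List.length) (t := range (n + 1))]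
  · refine sum_congr rfl fun l _ => ?_
    rw [← sum_image fun x _ y _ h => List.ofFn_injective h]
    congr 1
    ext L
    simp only [mem_filter, mem_compositions, mem_image, Nat.mem_antidiagonalTuple]
    constructor
    · rintro ⟨⟨hpos, hsum⟩, rfl⟩
      exact ⟨fun i => L[(i : ℕ)], ⟨by rwa [← List.sum_ofFn, List.ofFn_getElem],
        fun i => hpos _ (List.getElem_mem _)⟩, List.ofFn_getElem⟩
    · rintro ⟨ν, ⟨hsum, hpos⟩, rfl⟩
      exact ⟨⟨by simpa [List.mem_ofFn] using hpos, by rw [List.sum_ofFn, hsum]⟩,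
        List.length_ofFn⟩
  · intro L hL
    obtain ⟨c, -, rfl⟩ := mem_image.1 hL
    exact mem_range.2 (Nat.lt_succ_of_le c.length_le)

def word (L : List ℕ) : Hd := (L.map a).prod

theorem word_append (L₁ L₂ : List ℕ) : word (L₁ ++ L₂) = word L₁ * word L₂ := by
  simp [word]

def wordSum (c : List ℕ → ℤ) (n : ℕ) : Hd := ∑ L ∈ compositions n, (c L : Hd) * word L

theorem wordSum_zero (c : List ℕ → ℤ) : wordSum c 0 = c [] := by
  simp [wordSum, compositions_zero, word]

theorem sum_antidiagonal_wordSum_mul_wordSum (c : List ℕ → ℤ) (d : ℕ → List ℕ → ℤ) (n : ℕ) :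
    ∑ p ∈ antidiagonal n, wordSum c p.1 * wordSum (d p.1) p.2 =
      wordSum (fun L => ∑ s ∈ range (L.length + 1),
        c (L.take s) * d (L.take s).sum (L.drop s)) n := by
  have hterm : ∀ p ∈ antidiagonal n, wordSum c p.1 * wordSum (d p.1) p.2 =
      ∑ L₁ ∈ compositions p.1, ∑ L₂ ∈ compositions p.2,
        ((c L₁ * d L₁.sum L₂ : ℤ) : Hd) * word (L₁ ++ L₂) := fun p _ => by
    rw [wordSum, wordSum, sum_mul_sum]
    refine sum_congr rfl fun L₁ hL₁ => sum_congr rfl fun L₂ _ => ?_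
    rw [(mem_compositions.1 hL₁).2, Int.cast_mul, word_append, mul_assoc, mul_assoc,
      (Int.cast_commute _ (word L₁)).symm.left_comm]
  rw [sum_congr rfl hterm, sum_antidiagonal_sum_compositions, wordSum]
  simp only [List.take_append_drop, Int.cast_sum, sum_mul]

theorem Q_succ (k m : ℕ) : Q (k + 1) m = ∑ p ∈ antidiagonal m, Q k p.1 * a p.2 := by
  rw [Q, sum_antidiagonalTuple_succ_s6]
  refine sum_congr rfl fun p _ => ?_
  rw [Q, sum_mul]
  refine sum_congr rfl fun x _ => ?_
  rw [List.ofFn_succ', List.prod_concat]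
  simp

theorem a_eq_wordSum (v : ℕ) : a v = wordSum (fun L => (Nat.choose 1 L.length : ℤ)) v := by
  rcases Nat.eq_zero_or_pos v with rfl | hv
  · simp [wordSum_zero, a]
  · rw [wordSum, sum_eq_single [v]]
    · simp [word]
    · intro L hL hne
      have hlen : 1 < L.length := by
        rcases Nat.lt_or_ge 1 L.length with h | h
        · exact h
        · obtain ⟨x, rfl⟩ := List.length_eq_one_iff.1 (le_antisymm h
            (List.length_pos_iff.2 (ne_nil_of_mem_compositions hL hv.ne')))
          have hx := (mem_compositions.1 hL).2
          rw [List.sum_singleton] at hx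
          exact absurd (hx ▸ rfl) hne
      simp [Nat.choose_eq_zero_of_lt hlen]
    · intro h
      exact absurd (mem_compositions.2 ⟨by simpa using hv, by simp⟩) h

theorem sum_range_choose_mul_choose_one (k l : ℕ) :
    ∑ s ∈ range (l + 1), k.choose s * Nat.choose 1 (l - s) = (k + 1).choose l := by
  rw [Nat.add_choose_eq,
    Nat.sum_antidiagonal_eq_sum_range_succ (fun i j => k.choose i * Nat.choose 1 j)]

theorem Q_eq_wordSum (k m : ℕ) : Q k m = wordSum (fun L => (k.choose L.length : ℤ)) m := by
  induction k generalizing m with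
  | zero =>
    rcases Nat.eq_zero_or_pos m with rfl | hm
    · simp [Q, wordSum_zero]
    · obtain ⟨m, rfl⟩ := Nat.exists_eq_add_of_lt hm
      rw [Q, zero_add, Nat.antidiagonalTuple_zero_succ, sum_empty, wordSum]
      refine (sum_eq_zero fun L hL => ?_).symm
      rw [Nat.choose_eq_zero_of_lt (List.length_pos_iff.2
        (ne_nil_of_mem_compositions hL (Nat.succ_ne_zero m)))]
      simp
  | succ k ih =>
    simp only [Q_succ, ih, a_eq_wordSum]
    rw [sum_antidiagonal_wordSum_mul_wordSum _ (fun _ L => (Nat.choose 1 L.length : ℤ))]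
    congr 1
    funext L
    rw [← sum_range_choose_mul_choose_one, Nat.cast_sum]
    refine sum_congr rfl fun s hs => ?_
    rw [List.length_take, List.length_drop, min_eq_left (by simpa [Nat.lt_succ_iff] using hs)]
    push_cast; rfl

-- For `L = []` the truncated `L.length - 1` gives `λ() = 1`, the coefficient of `S a_0 = 1`.
def antipodeCoeff (L : List ℕ) : ℤ :=
  (-1) ^ L.length * lam (L.length - 1) (fun i => L.getD i 0)

theorem antipodeCoeff_nil : antipodeCoeff [] = 1 := by
  simp [antipodeCoeff, lam_zero]

theorem sum_range_antipodeCoeff_take_mul_choose {L : List ℕ} (hL : L ≠ []) :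
    ∑ s ∈ range (L.length + 1), antipodeCoeff (L.take s) *
      ((L.take s).sum + 1).choose (L.drop s).length = 0 := by
  obtain ⟨K, hK⟩ : ∃ K, L.length = K + 1 :=
    ⟨L.length - 1, by have := List.length_pos_iff.2 hL; omega⟩
  have hterm : ∀ s ∈ range (K + 1), antipodeCoeff (L.take (s + 1)) *
      ((L.take (s + 1)).sum + 1).choose (L.drop (s + 1)).length =
      -((-1) ^ s * lam s (fun i => L.getD i 0) *
        (∑ i ∈ range (s + 1), L.getD i 0 + 1).choose (K - s)) := fun s hs => by
    have hs : s + 1 ≤ L.length := by rw [mem_range] at hs; omega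
    have hlam : (fun i : Fin s => (L.take (s + 1)).getD i 0) = fun i : Fin s => L.getD i 0 := by
      funext i
      simp [List.getD_eq_getElem?_getD, show (i : ℕ) < s + 1 by omega]
    rw [antipodeCoeff, List.length_take, min_eq_left hs, Nat.add_sub_cancel, hlam,
      sum_take_eq_sum_range_getD, List.length_drop, hK, Nat.add_sub_add_right]
    ring
  rw [hK, sum_range_succ', sum_congr rfl hterm, sum_neg_distrib,
    sum_range_lam_mul_choose (fun i => L.getD i 0)]
  rcases K with _ | K <;> simp [antipodeCoeff_nil, hK, Nat.choose_eq_zero_iff]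

theorem antipodeCoeff_ofFn_mul_word {k : ℕ} (ν : Fin (k + 1) → ℕ) :
    (antipodeCoeff (List.ofFn ν) : Hd) * word (List.ofFn ν) =
      -((-1 : Hd) ^ k *
        ((lam k (fun i => ν i.castSucc) : Hd) * (List.ofFn fun i => a (ν i)).prod)) := by
  have hlam : lam k (fun i => (List.ofFn ν).getD i 0) = lam k (fun i => ν i.castSucc) := by
    congr 1
    funext i
    rw [List.getD_eq_getElem _ _ (by rw [List.length_ofFn]; omega), List.getElem_ofFn]
    rfl
  rw [antipodeCoeff, List.length_ofFn, Nat.add_sub_cancel, hlam, word, List.map_ofFn]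
  push_cast
  rw [pow_succ, mul_neg_one, neg_mul, neg_mul, mul_assoc]
  rfl

theorem sum_antidiagonal_wordSum_antipodeCoeff_mul_Q {n : ℕ} (hn : n ≠ 0) :
    ∑ p ∈ antidiagonal n, wordSum antipodeCoeff p.1 * Q (p.1 + 1) p.2 = 0 := by
  simp only [Q_eq_wordSum]
  rw [sum_antidiagonal_wordSum_mul_wordSum _ (fun p L => ((p + 1).choose L.length : ℤ)), wordSum]
  refine sum_eq_zero fun L hL => ?_
  rw [sum_range_antipodeCoeff_take_mul_choose (ne_nil_of_mem_compositions hL hn), Int.cast_zero,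
    zero_mul]

theorem wordSum_antipodeCoeff_eq_neg_sub_sum (n : ℕ) :
    wordSum antipodeCoeff (n + 1) =
      -a (n + 1) - ∑ p ∈ Icc 1 n, wordSum antipodeCoeff p * Q (p + 1) (n + 1 - p) := by
  have h := sum_antidiagonal_wordSum_antipodeCoeff_mul_Q n.succ_ne_zero
  rw [Nat.sum_antidiagonal_eq_sum_range_succ_mk, sum_range_succ, sum_range_succ'] at h
  have hQ1 : Q 1 (n + 1) = a (n + 1) := by rw [Q_eq_wordSum, a_eq_wordSum]
  simp only [Nat.sub_self, Q_eq_wordSum _ 0, wordSum_zero, List.length_nil, Nat.choose_zero_right,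
    Nat.cast_one, Int.cast_one, mul_one, zero_add, Nat.sub_zero, hQ1, antipodeCoeff_nil,
    one_mul] at h
  rw [← Ico_add_one_right_eq_Icc, sum_Ico_eq_sum_range, Nat.add_sub_cancel, ← sub_eq_zero, ← h]
  simp only [add_comm 1]
  abel

theorem Sgen_eq_wordSum (n : ℕ) (hn : n ≠ 0) : Sgen n = wordSum antipodeCoeff n := by
  induction n using Nat.strong_induction_on with
  | _ n ih =>
    obtain ⟨m, rfl⟩ := Nat.exists_eq_succ_of_ne_zero hn
    rw [Sgen, Finset.sum_attach (Icc 1 (m + 1 - 1)) (fun p : ℕ => Sgen p * Q (p + 1) (m + 1 - p)),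
      wordSum_antipodeCoeff_eq_neg_sub_sum, Nat.add_sub_cancel]
    congr 1
    refine sum_congr rfl fun p hp => ?_
    rw [mem_Icc] at hp
    rw [ih p (by omega) (by omega)]

theorem antipode_formula_general (n : ℕ) :
    Sgen n =
      -(a n) - ∑ k ∈ Finset.Icc 1 (n - 1), (-1 : Hd) ^ k *
        ∑ ν ∈ (Finset.Nat.antidiagonalTuple (k + 1) n).filter (fun ν => ∀ i, 0 < ν i),
          (lam k (fun i => ν i.castSucc) : Hd) * (List.ofFn fun i => a (ν i)).prod := by
  rcases n with _ | m
  · rw [Sgen, show Icc 1 (0 - 1) = ∅ by simp]; simp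
  have hrange : range (m + 1) = insert 0 (Icc 1 m) := by ext; simp; omega
  rw [Sgen_eq_wordSum _ m.succ_ne_zero, wordSum, sum_compositions_eq_sum_range,
    sum_range_succ', hrange, sum_insert (by simp), Nat.antidiagonalTuple_zero_succ, filter_empty,
    sum_empty, add_zero, Nat.add_sub_cancel, sub_eq_add_neg]
  simp only [antipodeCoeff_ofFn_mul_word, sum_neg_distrib, ← mul_sum]
  congr 1
  simp [Nat.antidiagonalTuple_one, filter_singleton, lam_zero]

/-- The explicit non-recursive formula for the antipode of `H^dif`:
`S a_n = -a_n - ∑_{k=1}^{n-1} (-1)^k ∑_{n_1+⋯+n_{k+1}=n, n_i>0}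
  λ(n_1,…,n_k) a_{n_1} ⋯ a_{n_k} a_{n_{k+1}}`. -/
theorem antipode_formula (n : ℕ) (hn : 1 ≤ n) :
    Sgen n =
      -(a n) - ∑ k ∈ Finset.Icc 1 (n - 1), (-1 : Hd) ^ k *
        ∑ ν ∈ (Finset.Nat.antidiagonalTuple (k + 1) n).filter (fun ν => ∀ i, 0 < ν i),
          (lam k (fun i => ν i.castSucc) : Hd) * (List.ofFn fun i => a (ν i)).prod :=
  antipode_formula_general n

end
end

section
/- For all m, n \ge 0, the co-product \Delta^{dif} of H^{dif} acts on the polynomials Q_m^{(n)}(a) by \Delta^{dif} Q_m^{(n)}(a) = \sum_{k=0}^{m} Q_{m-k}^{(n)}(a) \otimes Q_k^{(n+m-k)}(a). In particular the sub-algebra generated by the Q_m^{(n)}(a) is a sub-co-algebra of H^{dif}. -/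
open Finset

noncomputable section

open TensorProduct in
/-- The co-product `Δ^dif : H^dif → H^dif ⊗ H^dif`, defined on the generators by
`Δ^dif a_n = ∑_{k=0}^n a_k ⊗ Q_{n-k}^{(k)}(a)` and extended as an algebra homomorphism. -/
def Δdif : Hd →ₐ[ℂ] Hd ⊗[ℂ] Hd :=
  FreeAlgebra.lift ℂ fun i : {n : ℕ // 0 < n} =>
    ∑ k ∈ Finset.range (i.1 + 1), a k ⊗ₜ[ℂ] Q (k + 1) (i.1 - k)

/-!
With `A(X) = ∑ₙ aₙ Xⁿ ∈ H^dif[[X]]`, `Q k m` is the coefficient of `X^m` in `A(X)^k`, so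
`Q (p + q)` is the convolution of `Q p` and `Q q`. Since `Δ^dif` is multiplicative and
`Q (N + 1) m = ∑_{i+j=m} a_i Q N j`, induction on `N` reduces the claim to multiplying
`Δ^dif a_i = ∑_{α+β=i} a_α ⊗ Q (α+1) β` with the known `Δ^dif (Q N j)`: in the second tensor
factor, `Q (α+1) β · Q (N+γ) δ` summed over `β + δ` convolves to `Q (N+1+α+γ)`.
-/

open TensorProduct

theorem Finset.Nat.sum_antidiagonal_antidiagonal_antidiagonal_comm {M : Type*}
    [AddCommMonoid M] (m : ℕ) (f : ℕ → ℕ → ℕ → ℕ → M) :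
    ∑ x ∈ antidiagonal m, ∑ y ∈ antidiagonal x.1, ∑ z ∈ antidiagonal x.2, f y.1 y.2 z.1 z.2 =
      ∑ x ∈ antidiagonal m, ∑ y ∈ antidiagonal x.1, ∑ z ∈ antidiagonal x.2,
        f y.1 z.1 y.2 z.2 := by
  simp only [Finset.sum_sigma']
  let swap : (_ : ℕ × ℕ) × (_ : ℕ × ℕ) × (ℕ × ℕ) → (_ : ℕ × ℕ) × (_ : ℕ × ℕ) × (ℕ × ℕ) :=
    fun ⟨_, (α, β), (γ, δ)⟩ => ⟨(α + γ, β + δ), (α, γ), (β, δ)⟩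
  refine Finset.sum_nbij' swap swap ?_ ?_ ?_ ?_ ?_ <;>
    rintro ⟨⟨_, _⟩, ⟨_, _⟩, ⟨_, _⟩⟩ <;> simp [swap] <;> omega

lemma Q_zero_left (m : ℕ) : Q 0 m = if m = 0 then 1 else 0 := by
  cases m <;> simp [Q]

lemma Q_succ_left (k m : ℕ) : Q (k + 1) m = ∑ x ∈ antidiagonal m, a x.1 * Q k x.2 := by
  -- the list underlying `antidiagonalTuple (k + 1) m` prepends `x.1` to `antidiagonalTuple k x.2`
  change ((List.Nat.antidiagonalTuple (k + 1) m).map _).sum =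
    ((List.Nat.antidiagonal m).map _).sum
  simp only [List.Nat.antidiagonalTuple, List.flatMap_def, List.map_flatten, List.sum_flatten,
    List.map_map]
  congr 1
  refine List.map_congr_left fun x _ => ?_
  simp only [Function.comp_def, List.ofFn_succ, Fin.cons_zero, Fin.cons_succ, List.prod_cons,
    List.sum_map_mul_left, List.map_map]
  rfl

lemma coeff_mk_pow (k m : ℕ) : PowerSeries.coeff m (PowerSeries.mk a ^ k) = Q k m := by
  induction k generalizing m with
  | zero => rw [pow_zero, PowerSeries.coeff_one, Q_zero_left]
  | succ k ih =>
    simp only [pow_succ', PowerSeries.coeff_mul, PowerSeries.coeff_mk, ih, Q_succ_left]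

lemma Q_one (m : ℕ) : Q 1 m = a m := by
  rw [← coeff_mk_pow, pow_one, PowerSeries.coeff_mk]

lemma Q_add (p q m : ℕ) : Q (p + q) m = ∑ x ∈ antidiagonal m, Q p x.1 * Q q x.2 := by
  simp only [← coeff_mk_pow, pow_add, PowerSeries.coeff_mul]

lemma Δdif_a (n : ℕ) : Δdif (a n) = ∑ x ∈ antidiagonal n, a x.1 ⊗ₜ[ℂ] Q (x.1 + 1) x.2 := by
  cases n with
  | zero => simp [a, Q_one, Algebra.TensorProduct.one_def]
  | succ n =>
    rw [Finset.Nat.sum_antidiagonal_eq_sum_range_succ (fun i j => a i ⊗ₜ[ℂ] Q (i + 1) j)]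
    exact FreeAlgebra.lift_ι_apply _ _

lemma Δdif_Q_eq_sum_antidiagonal (N m : ℕ) :
    Δdif (Q N m) = ∑ x ∈ antidiagonal m, Q N x.1 ⊗ₜ[ℂ] Q (N + x.1) x.2 := by
  induction N generalizing m with
  | zero =>
    rw [Finset.Nat.sum_antidiagonal_eq_sum_range_succ (fun i j => Q 0 i ⊗ₜ[ℂ] Q (0 + i) j),
      Finset.sum_range_succ']
    by_cases hm : m = 0 <;> simp [hm, Q_zero_left, Algebra.TensorProduct.one_def]
  | succ N ih =>
    rw [Q_succ_left, map_sum]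
    simp only [map_mul, Δdif_a, ih, Finset.sum_mul_sum, Algebra.TensorProduct.tmul_mul_tmul]
    rw [Finset.Nat.sum_antidiagonal_antidiagonal_antidiagonal_comm m
      (fun α β γ δ => (a α * Q N γ) ⊗ₜ[ℂ] (Q (α + 1) β * Q (N + γ) δ))]
    refine Finset.sum_congr rfl fun x _ => ?_
    rw [Q_succ_left, TensorProduct.sum_tmul]
    refine Finset.sum_congr rfl fun u hu => ?_
    rw [HasAntidiagonal.mem_antidiagonal] at hu
    rw [show N + 1 + x.1 = (u.1 + 1) + (N + u.2) by omega, Q_add, TensorProduct.tmul_sum]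

/-- `Δ^dif Q_m^{(n)}(a) = ∑_{k=0}^m Q_{m-k}^{(n)}(a) ⊗ Q_k^{(n+m-k)}(a)`; in particular the
sub-algebra generated by the `Q_m^{(n)}(a)` is a sub-co-algebra of `H^dif`. -/
theorem Δdif_Q (n m : ℕ) :
    Δdif (Q (n + 1) m) =
      ∑ k ∈ Finset.range (m + 1), Q (n + 1) (m - k) ⊗ₜ[ℂ] Q (n + m - k + 1) k := by
  rw [Δdif_Q_eq_sum_antidiagonal, ← Finset.Nat.sum_antidiagonal_swap,
    Finset.Nat.sum_antidiagonal_eq_sum_range_succ_mk]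
  refine Finset.sum_congr rfl fun k hk => ?_
  rw [Finset.mem_range] at hk
  rw [Prod.swap_prod_mk, show n + 1 + (m - k) = n + m - k + 1 by omega]

end
end
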